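/- Assume a_1, …, a_ℓ are nonzero and pairwise non-σ-conjugate, and let x = (x^(1) | ⋯ | x^(ℓ)) ∈ F^n satisfy rk_q(x^(i)) = n_i for every i = 1, …, ℓ. Then for every d ∈ ℕ, the σ-generalized Moore matrix λ_d(x)_a⃗ ∈ F^(d×n) satisfies rk_F(λ_d(x)_a⃗) = min{d, n}. -/

import Mathlib

namespace Stmt1

/-- `genNorm σ a i = σ^(i-1)(a) ⋯ σ(a) · a`, the generalized power function `N_i(a)`. -/
def genNorm {F : Type} [Field F] (σ : F ≃+* F) (a : F) : ℕ → F
  | 0 => 1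
  | i + 1 => (⇑σ)^[i] a * genNorm σ a i

/-- Generalized operator `D_a^i(b) = σ^i(b) · N_i(a)` for `i ∈ ℕ`. -/
def opev {F : Type} [Field F] (σ : F ≃+* F) (a b : F) (i : ℕ) : F :=
  (⇑σ)^[i] b * genNorm σ a i

/-- `b` is σ-conjugate to `a`, i.e. `b = σ(c)·a·c⁻¹` for some nonzero `c`. -/
def SConj {F : Type} [Field F] (σ : F ≃+* F) (a b : F) : Prop :=
  ∃ c : F, c ≠ 0 ∧ b = σ c * a * c⁻¹

/-- σ-generalized Moore matrix `λ_d(x)_a⃗` w.r.t. the length partition `nn`: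
its row `r` applies `D_{a_i}^r` entrywise to the `i`-th block of `x`. -/
def moore {F : Type} [Field F] (σ : F ≃+* F) {ℓ : ℕ} (nn : Fin ℓ → ℕ) (aa : Fin ℓ → F)
    (d : ℕ) (x : (Σ i : Fin ℓ, Fin (nn i)) → F) :
    Matrix (Fin d) (Σ i : Fin ℓ, Fin (nn i)) F :=
  Matrix.of fun r p => opev σ (aa p.1) (x p) (r : ℕ)

/-- `λ_d(X)_a⃗` for a matrix `X`: the stack of `λ_d(x_j)_a⃗` over the rows of `X`. -/
def mooreMat {F : Type} [Field F] (σ : F ≃+* F) {ℓ : ℕ} (nn : Fin ℓ → ℕ) (aa : Fin ℓ → F)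
    {s : ℕ} (d : ℕ) (X : Matrix (Fin s) (Σ i : Fin ℓ, Fin (nn i)) F) :
    Matrix (Fin s × Fin d) (Σ i : Fin ℓ, Fin (nn i)) F :=
  Matrix.of fun r p => opev σ (aa p.1) (X r.1 p) (r.2 : ℕ)

/-- `rk_q` of a vector: the `K`-dimension of the `K`-span of its entries. -/
noncomputable def rkq (K : Type) [Field K] {F : Type} [Field F] [Algebra K F] {ι : Type}
    (v : ι → F) : ℕ :=
  Module.finrank K (Submodule.span K (Set.range v))

/-- `rk_q` of a matrix: the `K`-dimension of the `K`-span of its columns. -/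
noncomputable def rkqMat (K : Type) [Field K] {F : Type} [Field F] [Algebra K F]
    {s : ℕ} {ι : Type} (X : Matrix (Fin s) ι F) : ℕ :=
  Module.finrank K (Submodule.span K (Set.range fun j : ι => fun r : Fin s => X r j))

/-- Sum-rank weight of a blockwise vector. -/
noncomputable def wtV (K : Type) [Field K] {F : Type} [Field F] [Algebra K F] {ℓ : ℕ}
    (nn : Fin ℓ → ℕ) (x : (Σ i : Fin ℓ, Fin (nn i)) → F) : ℕ :=
  ∑ i, rkq K fun μ : Fin (nn i) => x ⟨i, μ⟩

/-- Sum-rank weight of a blockwise matrix. -/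
noncomputable def wtM (K : Type) [Field K] {F : Type} [Field F] [Algebra K F] {s ℓ : ℕ}
    (nn : Fin ℓ → ℕ) (X : Matrix (Fin s) (Σ i : Fin ℓ, Fin (nn i)) F) : ℕ :=
  ∑ i, rkqMat K (Matrix.of fun (r : Fin s) (μ : Fin (nn i)) => X r ⟨i, μ⟩)

/-- Codeword `C(M) = M · λ_k(β)_a⃗` of the `s`-interleaved linearized Reed–Solomon code. -/
def codeword {F : Type} [Field F] (σ : F ≃+* F) {ℓ : ℕ} (nn : Fin ℓ → ℕ) (aa : Fin ℓ → F)
    (β : (Σ i : Fin ℓ, Fin (nn i)) → F) {s : ℕ} (k : ℕ) (M : Matrix (Fin s) (Fin k) F) :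
    Matrix (Fin s) (Σ i : Fin ℓ, Fin (nn i)) F :=
  M * moore σ nn aa k β

/-!
A vanishing combination of the first `d` rows of `λ_d(x)_a⃗` with coefficients `c_r` is a skew
polynomial `f = ∑ c_r t^r ∈ F[t; σ]` of degree `< d` whose evaluation at `D_{a_i}` kills the
`K`-span of `x^(i)`, a space of dimension `n_i`. The heart of the proof is the bound
`∑ᵢ dim_K ker f(D_{a_i}) ≤ deg f` for nonzero, pairwise non-σ-conjugate `a_i`; it makes `n < d`
impossible, so the rows are independent as long as `d ≤ n`.

The bound goes by induction on `deg f`. If `b ≠ 0` lies in `ker f(D_{a_i})`, put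
`e = σ(b) a_i b⁻¹`. Right division gives `f = g · (t - e) + ρ`, and evaluating at `b`, which is
killed by `D_{a_i} - e`, forces `ρ = 0`. So each `ker f(D_{a_j})` exceeds `ker g(D_{a_j})` by at
most `dim ker (D_{a_j} - e)`. A nonzero kernel of `D_{a_j} - e` makes `a_j` σ-conjugate to `e`,
hence to `a_i`, so only `j = i` contributes, and there the kernel is a line: two solutions of
`σ(u) a = e u` differ by a σ-fixed factor, which lies in `K`.
-/

open Module Finset
open LinearMap (ker)

theorem SConj.symm {F : Type} [Field F] {σ : F ≃+* F} {a b : F} (h : SConj σ a b) :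
    SConj σ b a := by
  obtain ⟨c, hc, rfl⟩ := h
  have hσc : σ c ≠ 0 := (map_ne_zero σ).2 hc
  exact ⟨c⁻¹, inv_ne_zero hc, by rw [map_inv₀]; field_simp⟩

theorem SConj.trans {F : Type} [Field F] {σ : F ≃+* F} {a b c : F} (hab : SConj σ a b)
    (hbc : SConj σ b c) : SConj σ a c := by
  obtain ⟨u, hu, rfl⟩ := hab
  obtain ⟨v, hv, rfl⟩ := hbc
  exact ⟨v * u, mul_ne_zero hv hu, by rw [map_mul, mul_inv]; ring⟩

theorem rank_ker_mul_le {R V : Type*} [DivisionRing R] [AddCommGroup V] [Module R V]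
    (f g : Module.End R V) :
    Module.rank R (ker (f * g)) ≤ Module.rank R (ker g) + Module.rank R (ker f) := by
  have := LinearMap.lift_rank_comap_le (f := g) (ker f)
  rw [Module.End.mul_eq_comp, LinearMap.ker_comp, add_comm]
  simpa only [Cardinal.lift_id] using this

section SkewEvaluation

variable {K F : Type} [CommSemiring K] [Field F] [Algebra K F] (σ : F ≃ₐ[K] F)

/-- The operator `D_a` of the paper. -/
def twistMul (a : F) : Module.End K F := LinearMap.mulRight K a ∘ₗ σ.toLinearMap

@[simp] theorem twistMul_apply (a u : F) : twistMul σ a u = σ u * a := rfl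

theorem twistMul_pow_apply (a b : F) (r : ℕ) :
    (twistMul σ a ^ r) b = opev σ.toRingEquiv a b r := by
  induction r generalizing b with
  | zero => simp [opev, genNorm]
  | succ r ih =>
    rw [pow_succ, Module.End.mul_apply, ih, twistMul_apply]
    simp only [opev, genNorm, Function.iterate_succ_apply, iterate_map_mul,
      AlgEquiv.coe_ringEquiv]
    ring

theorem twistMul_pow_mul_lmul (a e : F) (r : ℕ) :
    twistMul σ a ^ r * Algebra.lmul K F e = Algebra.lmul K F ((σ ^ r) e) * twistMul σ a ^ r := by
  induction r generalizing e with
  | zero => simp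
  | succ r ih =>
    have hstep : twistMul σ a * Algebra.lmul K F e = Algebra.lmul K F (σ e) * twistMul σ a := by
      ext u
      simp only [Module.End.mul_apply, twistMul_apply, Algebra.coe_lmul_eq_mul,
        LinearMap.mul_apply', map_mul]
      ring
    rw [pow_succ, mul_assoc, hstep, ← mul_assoc, ih, mul_assoc, pow_succ σ, AlgEquiv.mul_apply]

/-- The evaluation `f(D_a)` of the skew polynomial `f = ∑_{r ≤ d} c_r t^r ∈ F[t; σ]`. -/
def skewEval (c : ℕ → F) (d : ℕ) (a : F) : Module.End K F :=
  ∑ r ∈ range (d + 1), Algebra.lmul K F (c r) * twistMul σ a ^ r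

theorem skewEval_apply (c : ℕ → F) (d : ℕ) (a b : F) :
    skewEval σ c d a b = ∑ r ∈ range (d + 1), c r * opev σ.toRingEquiv a b r := by
  simp [skewEval, twistMul_pow_apply]

theorem skewEval_succ (c : ℕ → F) (d : ℕ) (a : F) :
    skewEval σ c (d + 1) a =
      skewEval σ c d a + Algebra.lmul K F (c (d + 1)) * twistMul σ a ^ (d + 1) :=
  sum_range_succ _ _

theorem skewEval_update_succ (c : ℕ → F) (d : ℕ) (v a : F) :
    skewEval σ (Function.update c (d + 1) v) (d + 1) a =
      skewEval σ c d a + Algebra.lmul K F v * twistMul σ a ^ (d + 1) := by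
  rw [skewEval_succ, Function.update_self]
  congr 1
  refine sum_congr rfl fun r hr => ?_
  rw [Function.update_of_ne (by simp at hr; omega)]

/-- Right division by `t - e` in `F[t; σ]`, seen through all evaluations at once. -/
theorem exists_skewEval_eq_mul_sub_add (e : F) :
    ∀ (d : ℕ) (c : ℕ → F), ∃ g : ℕ → F, g d = c (d + 1) ∧ ∃ ρ : F, ∀ a : F,
      skewEval σ c (d + 1) a =
        skewEval σ g d a * (twistMul σ a - Algebra.lmul K F e) + Algebra.lmul K F ρ
  | 0, c => ⟨fun _ => c 1, rfl, c 0 + c 1 * e, fun a => by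
      rw [skewEval_succ]
      simp only [skewEval, zero_add, range_one, sum_singleton, pow_zero, pow_one, mul_one,
        mul_sub, map_add, map_mul]
      abel⟩
  | d + 1, c => by
    -- divide the leading term `c_{d+2} t^{d+2}` first, folding its correction into `c_{d+1}`
    obtain ⟨g, hg, ρ, h⟩ := exists_skewEval_eq_mul_sub_add e d
      (Function.update c (d + 1) (c (d + 1) + c (d + 1 + 1) * (σ ^ (d + 1)) e))
    refine ⟨Function.update g (d + 1) (c (d + 1 + 1)), by simp, ρ, fun a => ?_⟩
    have hc : skewEval σ c (d + 1) a =
        skewEval σ g d a * (twistMul σ a - Algebra.lmul K F e) + Algebra.lmul K F ρ -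
          Algebra.lmul K F (c (d + 1 + 1) * (σ ^ (d + 1)) e) * twistMul σ a ^ (d + 1) := by
      rw [← h a, skewEval_update_succ, skewEval_succ, map_add, add_mul]
      abel
    rw [skewEval_succ σ c (d + 1), hc, skewEval_update_succ, pow_succ (twistMul σ a) (d + 1),
      map_mul]
    simp only [add_mul, mul_sub, mul_assoc, twistMul_pow_mul_lmul]
    abel

theorem mem_ker_twistMul_sub {a e u : F} :
    u ∈ ker (twistMul σ a - Algebra.lmul K F e) ↔ σ u * a = e * u := by
  simp [Algebra.coe_lmul_eq_mul, sub_eq_zero]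

theorem exists_skewEval_eq_mul_twistMul_sub {c : ℕ → F} {d : ℕ} {a b : F}
    (hb : b ∈ ker (skewEval σ c (d + 1) a)) (hb0 : b ≠ 0) :
    ∃ g : ℕ → F, g d = c (d + 1) ∧ ∀ a' : F, skewEval σ c (d + 1) a' =
      skewEval σ g d a' * (twistMul σ a' - Algebra.lmul K F (σ b * a * b⁻¹)) := by
  obtain ⟨g, hgd, ρ, hdiv⟩ := exists_skewEval_eq_mul_sub_add σ (σ b * a * b⁻¹) d c
  have hbe : b ∈ ker (twistMul σ a - Algebra.lmul K F (σ b * a * b⁻¹)) := by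
    rw [mem_ker_twistMul_sub]
    exact (inv_mul_cancel_right₀ hb0 _).symm
  have hρ : ρ = 0 := by
    have := congr($(hdiv a) b)
    rw [LinearMap.mem_ker.1 hb, LinearMap.add_apply, Module.End.mul_apply,
      LinearMap.mem_ker.1 hbe, map_zero, zero_add, Algebra.coe_lmul_eq_mul,
      LinearMap.mul_apply'] at this
    exact (mul_eq_zero.1 this.symm).resolve_right hb0
  exact ⟨g, hgd, fun a' => by rw [hdiv, hρ, map_zero, add_zero]⟩

theorem sConj_of_ker_twistMul_sub_ne_bot {a e : F}
    (h : ker (twistMul σ a - Algebra.lmul K F e) ≠ ⊥) : SConj σ.toRingEquiv a e := by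
  obtain ⟨u, hu, hu0⟩ := Submodule.exists_mem_ne_zero_of_ne_bot h
  refine ⟨u, hu0, ?_⟩
  rw [AlgEquiv.coe_ringEquiv, (mem_ker_twistMul_sub σ).1 hu]
  field_simp

end SkewEvaluation

section KernelBounds

variable {K F : Type} [Field K] [Field F] [Algebra K F] (σ : F ≃ₐ[K] F)

theorem rank_ker_twistMul_sub_le_one (hfix : ∀ x, σ x = x → x ∈ Set.range (algebraMap K F))
    {a : F} (ha : a ≠ 0) (e : F) :
    Module.rank K (ker (twistMul σ a - Algebra.lmul K F e)) ≤ 1 := by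
  by_cases hbot : ker (twistMul σ a - Algebra.lmul K F e) = ⊥
  · rw [hbot, rank_bot]
    exact zero_le_one
  obtain ⟨u, hu, hu0⟩ := Submodule.exists_mem_ne_zero_of_ne_bot hbot
  have hσu : σ u ≠ 0 := (map_ne_zero σ).2 hu0
  calc _ ≤ Module.rank K (K ∙ u) := Submodule.rank_mono fun v hv => ?_
    _ ≤ 1 := (rank_span_le _).trans_eq (Cardinal.mk_singleton u)
  rw [mem_ker_twistMul_sub] at hu hv
  obtain ⟨k, hk⟩ := hfix (v * u⁻¹) (by
    rw [map_mul, map_inv₀]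
    field_simp
    exact mul_right_cancel₀ ha (by linear_combination u * hv - v * hu))
  exact Submodule.mem_span_singleton.2
    ⟨k, by rw [Algebra.smul_def, hk, inv_mul_cancel_right₀ hu0]⟩

theorem sum_rank_ker_twistMul_sub_le_one {ι : Type*} [Fintype ι]
    (hfix : ∀ x, σ x = x → x ∈ Set.range (algebraMap K F)) {aa : ι → F}
    (ha0 : ∀ i, aa i ≠ 0) (haconj : Pairwise fun i j => ¬ SConj σ.toRingEquiv (aa i) (aa j))
    (e : F) :
    ∑ i, Module.rank K (ker (twistMul σ (aa i) - Algebra.lmul K F e)) ≤ 1 := by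
  by_cases h : ∀ i, ker (twistMul σ (aa i) - Algebra.lmul K F e) = ⊥
  · rw [sum_eq_zero fun i _ => by rw [h i, rank_bot]]
    exact zero_le_one
  obtain ⟨i, hi⟩ := not_forall.1 h
  rw [sum_eq_single i]
  · exact rank_ker_twistMul_sub_le_one σ hfix (ha0 i) e
  · intro j _ hji
    suffices ker (twistMul σ (aa j) - Algebra.lmul K F e) = ⊥ by rw [this, rank_bot]
    by_contra hj
    exact haconj hji ((sConj_of_ker_twistMul_sub_ne_bot σ hj).trans
      (sConj_of_ker_twistMul_sub_ne_bot σ hi).symm)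
  · simp

theorem sum_rank_ker_skewEval_le (hfix : ∀ x, σ x = x → x ∈ Set.range (algebraMap K F))
    {ι : Type*} [Fintype ι] {aa : ι → F} (ha0 : ∀ i, aa i ≠ 0)
    (haconj : Pairwise fun i j => ¬ SConj σ.toRingEquiv (aa i) (aa j)) :
    ∀ (d : ℕ) (c : ℕ → F), (∃ r ≤ d, c r ≠ 0) →
      ∑ i, Module.rank K (ker (skewEval σ c d (aa i))) ≤ d
  | 0, c, ⟨r, hr, hc⟩ => by
    obtain rfl : r = 0 := by omega
    have hker (a : F) : ker (skewEval σ c 0 a) = ⊥ :=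
      LinearMap.ker_eq_bot'.2 fun u hu => by simpa [skewEval_apply, opev, genNorm, hc] using hu
    simp [hker]
  | d + 1, c, ⟨r, hr, hc⟩ => by
    by_cases hlead : c (d + 1) = 0
    · have hdeg : skewEval σ c (d + 1) = skewEval σ c d := funext fun a => by
        rw [skewEval_succ, hlead, map_zero, zero_mul, add_zero]
      have hr' : r ≤ d := Nat.le_of_lt_succ (hr.lt_of_ne (by rintro rfl; exact hc hlead))
      rw [hdeg]
      exact (sum_rank_ker_skewEval_le hfix ha0 haconj d c ⟨r, hr', hc⟩).trans
        (by exact_mod_cast d.le_succ)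
    by_cases hall : ∀ i, ker (skewEval σ c (d + 1) (aa i)) = ⊥
    · rw [sum_eq_zero fun i _ => by rw [hall i, rank_bot]]
      exact zero_le
    obtain ⟨i, hi⟩ := not_forall.1 hall
    obtain ⟨b, hb, hb0⟩ := Submodule.exists_mem_ne_zero_of_ne_bot hi
    obtain ⟨g, hgd, hfac⟩ := exists_skewEval_eq_mul_twistMul_sub σ hb hb0
    set e := σ b * aa i * b⁻¹
    rw [funext hfac]
    calc _ ≤ ∑ j, (Module.rank K (ker (twistMul σ (aa j) - Algebra.lmul K F e)) +
            Module.rank K (ker (skewEval σ g d (aa j)))) :=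
          sum_le_sum fun j _ => rank_ker_mul_le _ _
      _ = ∑ j, Module.rank K (ker (twistMul σ (aa j) - Algebra.lmul K F e)) +
            ∑ j, Module.rank K (ker (skewEval σ g d (aa j))) := sum_add_distrib
      _ ≤ 1 + d := add_le_add (sum_rank_ker_twistMul_sub_le_one σ hfix ha0 haconj e)
            (sum_rank_ker_skewEval_le hfix ha0 haconj d g ⟨d, le_rfl, hgd ▸ hlead⟩)
      _ = ↑(d + 1) := by push_cast; exact add_comm _ _

theorem linearIndependent_moore (hfix : ∀ x, σ x = x → x ∈ Set.range (algebraMap K F))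
    {ℓ : ℕ} {nn : Fin ℓ → ℕ} {aa : Fin ℓ → F} (ha0 : ∀ i, aa i ≠ 0)
    (haconj : Pairwise fun i j => ¬ SConj σ.toRingEquiv (aa i) (aa j))
    {x : (Σ i : Fin ℓ, Fin (nn i)) → F}
    (hx : ∀ i, rkq K (fun μ : Fin (nn i) => x ⟨i, μ⟩) = nn i)
    {d : ℕ} (hd : d ≤ ∑ i, nn i) : LinearIndependent F (moore σ.toRingEquiv nn aa d x) := by
  refine Fintype.linearIndependent_iff.2 fun g hg r₀ => ?_
  by_contra hr₀
  obtain ⟨d, rfl⟩ : ∃ d', d = d' + 1 := ⟨d - 1, by have := r₀.isLt; omega⟩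
  let c : ℕ → F := fun r => if h : r < d + 1 then g ⟨r, h⟩ else 0
  have hblock (i : Fin ℓ) :
      (nn i : Cardinal) ≤ Module.rank K (ker (skewEval σ c d (aa i))) := by
    have := Module.Finite.span_of_finite K (Set.finite_range fun μ : Fin (nn i) => x ⟨i, μ⟩)
    rw [← hx i, rkq, finrank_eq_rank]
    refine Submodule.rank_mono (Submodule.span_le.2 ?_)
    rintro _ ⟨μ, rfl⟩
    rw [SetLike.mem_coe, LinearMap.mem_ker, skewEval_apply,
      ← Fin.sum_univ_eq_sum_range fun r => c r * opev σ.toRingEquiv (aa i) (x ⟨i, μ⟩) r]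
    simpa [c, moore, Fin.is_le] using congr_fun hg ⟨i, μ⟩
  have hsum := (sum_le_sum fun i _ => hblock i).trans (sum_rank_ker_skewEval_le σ hfix ha0
    haconj d c ⟨r₀, Fin.is_le r₀, by simpa [c, Fin.is_le] using hr₀⟩)
  rw [← Nat.cast_sum, Nat.cast_le] at hsum
  omega

end KernelBounds

theorem rank_moore_eq_min
    {K F : Type} [Field K] [Field F] [Algebra K F]
    (σ : F ≃+* F)
    (hfix : ∀ x : F, σ x = x ↔ x ∈ Set.range (algebraMap K F))
    {ℓ : ℕ} (nn : Fin ℓ → ℕ) (aa : Fin ℓ → F)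
    (ha0 : ∀ i, aa i ≠ 0)
    (haconj : ∀ i j : Fin ℓ, i ≠ j → ¬ SConj σ (aa i) (aa j))
    (x : (Σ i : Fin ℓ, Fin (nn i)) → F)
    (hx : ∀ i, rkq K (fun μ : Fin (nn i) => x ⟨i, μ⟩) = nn i)
    (d : ℕ) :
    (moore σ nn aa d x).rank = min d (∑ i, nn i) := by
  let τ : F ≃ₐ[K] F := AlgEquiv.ofRingEquiv (f := σ) fun k => (hfix _).2 ⟨k, rfl⟩
  have hfull {m : ℕ} (hm : m ≤ ∑ i, nn i) : (moore σ nn aa m x).rank = m :=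
    (linearIndependent_moore τ (fun y => (hfix y).1) ha0 haconj hx hm).rank_matrix.trans
      (Fintype.card_fin m)
  rcases le_total d (∑ i, nn i) with hd | hd
  · rw [min_eq_left hd, hfull hd]
  · rw [min_eq_right hd]
    refine le_antisymm ((Matrix.rank_le_card_width _).trans_eq (by simp)) ?_
    calc ∑ i, nn i = ((moore σ nn aa d x).submatrix (Fin.castLE hd) _root_.id).rank :=
          (hfull le_rfl).symm
      _ ≤ (moore σ nn aa d x).rank := Matrix.rank_submatrix_le _ _ _

end Stmt1
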